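/- Let G be a finite graph with constant interaction energy J and constant external field H favoring spin 1, with Hamiltonian h(σ) = −J Σ_{{i,j}∈E} δ(σ_i,σ_j) − H Σ_i δ(1,σ_i) and partition function Z(G) = Σ_{σ:V→{1,…,q}} e^{−βh(σ)}. Then Z(G) = Σ_{F∈F(G)} (∏_{i=1}^{k(F)} (e^{βH|V(F_i)|} + q − 1)) · (e^{βJ} − 1)^{|E(F)|} · ∏_{e externally active w.r.t. F} e^{βJ}, where F(G) is the set of spanning forests with components F_1,…,F_{k(F)}. -/

import Mathlib

open scoped Classical
open Finset

structure FinMultigraph (V E : Type) where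
  ends : E → Sym2 V

namespace FinMultigraph

variable {V E S R : Type} [Fintype V] [Fintype E]

/-- Two vertices are joined by an edge of `A`. -/
def adjRel (G : FinMultigraph V E) (A : Finset E) (u v : V) : Prop :=
  ∃ e ∈ A, G.ends e = s(u, v)

/-- The setoid on vertices whose classes are the connected components of the
spanning subgraph `(V, A)`. -/
def compSetoid (G : FinMultigraph V E) (A : Finset E) : Setoid V :=
  ⟨Relation.EqvGen (G.adjRel A), Relation.EqvGen.is_equivalence _⟩

/-- The connected components of the spanning subgraph `(V, A)`. -/
def Comp (G : FinMultigraph V E) (A : Finset E) : Type := Quotient (G.compSetoid A)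

noncomputable instance (G : FinMultigraph V E) (A : Finset E) : Fintype (G.Comp A) :=
  @Quotient.fintype V _ (G.compSetoid A) (Classical.decRel _)

/-- `k(A)`: the number of connected components of the spanning subgraph `(V, A)`. -/
noncomputable def kA (G : FinMultigraph V E) (A : Finset E) : ℕ := Nat.card (G.Comp A)

/-- `u` and `v` are connected in the spanning subgraph `(V, A)`. -/
def Connects (G : FinMultigraph V E) (A : Finset E) (u v : V) : Prop :=
  Relation.EqvGen (G.adjRel A) u v

/-- The endpoints of `e` are connected in the spanning subgraph `(V, A)`. -/
def EndsConnected (G : FinMultigraph V E) (A : Finset E) (e : E) : Prop :=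
  ∃ u v, G.ends e = s(u, v) ∧ G.Connects A u v

def IsLoop (G : FinMultigraph V E) (e : E) : Prop := (G.ends e).IsDiag

/-- `(V, A)` is a forest (acyclic spanning subgraph): every edge of `A` is a bridge of it. -/
def IsForest (G : FinMultigraph V E) (A : Finset E) : Prop :=
  ∀ e ∈ A, ¬ G.EndsConnected (A.erase e) e

/-- All vertices are pairwise connected using edges of `A`. -/
def ConnectsAll (G : FinMultigraph V E) (A : Finset E) : Prop := ∀ u v, G.Connects A u v

/-- A maximal spanning forest: a forest restricting to a spanning tree of each
connected component of `G`. -/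
def IsSpanningTree (G : FinMultigraph V E) (T : Finset E) : Prop :=
  G.IsForest T ∧ ∀ u v, G.Connects T u v ↔ G.Connects Finset.univ u v

/-- `e ∈ T` is internally active: `e` is minimal in the cut
`{f : (T - e) ∪ {f} ∈ 𝒯(G)}`. -/
def IntActive [LinearOrder E] (G : FinMultigraph V E) (T : Finset E) (e : E) : Prop :=
  e ∈ T ∧ ∀ f, G.IsSpanningTree (insert f (T.erase e)) → e ≤ f

/-- The edge set of the unique cycle of `T ∪ {e}` (when it exists):
`e` together with those `f ∈ T` whose removal disconnects the ends of `e`. -/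
noncomputable def cycleEdges (G : FinMultigraph V E) (T : Finset E) (e : E) : Finset E :=
  insert e (T.filter fun f => ¬ G.EndsConnected (T.erase f) e)

/-- `e ∉ T` is externally active: `T ∪ {e}` contains a cycle through `e` and
`e` is the minimal edge of that cycle. -/
def ExtActive [LinearOrder E] (G : FinMultigraph V E) (T : Finset E) (e : E) : Prop :=
  e ∉ T ∧ G.EndsConnected T e ∧ ∀ f ∈ G.cycleEdges T e, e ≤ f

/-- The vertex set of the component `c` of `(V, A)`. -/
noncomputable def compVerts (G : FinMultigraph V E) (A : Finset E) (c : G.Comp A) : Finset V :=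
  Finset.univ.filter fun v => (Quotient.mk (G.compSetoid A) v) = c

/-- The total vertex weight of the component `c` of `(V, A)`. -/
noncomputable def compWeight [AddCommMonoid S] (G : FinMultigraph V E) (A : Finset E)
    (ω : V → S) (c : G.Comp A) : S :=
  ∑ v ∈ G.compVerts A c, ω v

/-- The V-polynomial, defined by its state sum. -/
noncomputable def Vpoly [AddCommMonoid S] [CommRing R] (G : FinMultigraph V E)
    (ω : V → S) (γ : E → R) : MvPolynomial S R :=
  ∑ A : Finset E, (∏ c : G.Comp A, MvPolynomial.X (G.compWeight A ω c)) *
    MvPolynomial.C (∏ e ∈ A, γ e)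

/-- The multivariate Tutte polynomial `Z_T(G; q, γ)` as a polynomial in `q`. -/
noncomputable def ZT [CommRing R] (G : FinMultigraph V E) (γ : E → R) : Polynomial R :=
  ∑ A : Finset E, Polynomial.X ^ (G.kA A) * Polynomial.C (∏ e ∈ A, γ e)

/-- Deletion of the edge `e`. -/
def del (G : FinMultigraph V E) (e : E) : FinMultigraph V {f : E // f ≠ e} := ⟨fun f => G.ends f.1⟩

/-- Contraction of the edge `e`: vertices are the components of `(V, {e})`. -/
noncomputable def contract (G : FinMultigraph V E) (e : E) : FinMultigraph (G.Comp {e}) {f : E // f ≠ e} :=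
  ⟨fun f => (G.ends f.1).map (Quotient.mk (G.compSetoid {e}))⟩

/-- The forest `T` with the edges of `B` contracted: vertices are the components
of `(V, B)` and edges are `T \ B`. -/
noncomputable def contractIn (G : FinMultigraph V E) (T B : Finset E) :
    FinMultigraph (G.Comp B) ↥(T \ B : Finset E) :=
  ⟨fun f => (G.ends f.1).map (Quotient.mk (G.compSetoid B))⟩

/-- The edges of `G` with both ends inside `P`. -/
noncomputable def edgesIn (G : FinMultigraph V E) (P : Finset V) : Finset E :=
  Finset.univ.filter fun e => ∀ v ∈ G.ends e, v ∈ P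

/-- The subgraph of `G` induced by the vertex set `P`. -/
noncomputable def induce (G : FinMultigraph V E) (P : Finset V) : FinMultigraph ↥P ↥(G.edgesIn P) :=
  ⟨fun e => (G.ends e.1).pmap (fun v hv => (⟨v, hv⟩ : ↥P))
    (by have he := e.2; simp only [edgesIn, Finset.mem_filter] at he; exact he.2)⟩

/-- The block `B` induces a connected subgraph of `G`. -/
def BlockConnected (G : FinMultigraph V E) (B : Finset V) : Prop :=
  ∀ u ∈ B, ∀ v ∈ B, Relation.EqvGen (G.adjRel (G.edgesIn B)) u v

/-- A connected partition of `V(G)`: every vertex lies in exactly one block,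
blocks are nonempty, and each block induces a connected subgraph. -/
def IsConnectedPartition (G : FinMultigraph V E) (P : Finset (Finset V)) : Prop :=
  (∀ B ∈ P, B.Nonempty) ∧ (∀ v : V, ∃! B, B ∈ P ∧ v ∈ B) ∧ ∀ B ∈ P, G.BlockConnected B

/-- The partition `Π(A)` of `V(G)` into the components of `(V, A)`. -/
noncomputable def partitionOf (G : FinMultigraph V E) (A : Finset E) : Finset (Finset V) :=
  Finset.univ.image fun c : G.Comp A => G.compVerts A c

/-- The internally inactive edges of the spanning tree `T`. -/
noncomputable def intInactives [LinearOrder E] (G : FinMultigraph V E) (T : Finset E) : Finset E :=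
  T.filter fun e => ¬ G.IntActive T e

/-- The internally active edges of the spanning tree `T`. -/
noncomputable def intActives [LinearOrder E] (G : FinMultigraph V E) (T : Finset E) : Finset E :=
  T.filter fun e => G.IntActive T e

/-- The externally active edges w.r.t. the spanning tree / forest `T`. -/
noncomputable def extActives [LinearOrder E] (G : FinMultigraph V E) (T : Finset E) : Finset E :=
  Finset.univ.filter fun e => G.ExtActive T e

/-- Kronecker delta `δ(σ_i, σ_j)` for the two ends of the edge `e`. -/
noncomputable def edgeDelta (G : FinMultigraph V E) {q : ℕ} (σ : V → Fin q) (e : E) : ℂ :=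
  Sym2.lift ⟨fun u v => if σ u = σ v then 1 else 0, fun u v => by simp [eq_comm]⟩ (G.ends e)

/-- The Potts partition function with variable interactions `J` and
field vectors `M`. -/
noncomputable def Zext (G : FinMultigraph V E) (q : ℕ) (β : ℂ) (J : E → ℂ) (M : V → Fin q → ℂ) : ℂ :=
  ∑ σ : V → Fin q, Complex.exp (β * ((∑ e : E, J e * G.edgeDelta σ e) +
    ∑ v : V, ∑ α : Fin q, M v α * (if α = σ v then 1 else 0)))

/-- The Potts partition function with constant interaction `J` and constant
field `H` favouring the first spin. -/
noncomputable def ZconstField (G : FinMultigraph V E) (q : ℕ) (β J H : ℂ) : ℂ :=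
  ∑ σ : V → Fin q, Complex.exp (β * (J * (∑ e : E, G.edgeDelta σ e) +
    H * ∑ v : V, (if (σ v : ℕ) = 0 then (1 : ℂ) else 0)))

/-- The zero-field Potts partition function with constant interaction `J`. -/
noncomputable def Zzero (G : FinMultigraph V E) (q : ℕ) (β J : ℂ) : ℂ :=
  ∑ σ : V → Fin q, Complex.exp (β * J * ∑ e : E, G.edgeDelta σ e)

end FinMultigraph

/-!
Expanding `exp (βJ δ) = 1 + (e^{βJ} - 1) δ` edge by edge turns `Z` into the Fortuin–Kasteleyn
sum over edge sets `A`, in which the spin sum factorises over the clusters of `A`: a cluster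
with `n` vertices contributes `e^{βHn} + q - 1`. Kruskal's algorithm, run on `A` in decreasing
edge order, extracts a spanning forest `F ⊆ A` with the same clusters, and the edge sets
yielding a given forest `F` are exactly the sets `F ∪ S` with `S` a set of externally active
edges of `F`. Summing `(e^{βJ} - 1)^{|S|}` over these `S` gives `e^{βJ |EA(F)|}`.
-/

namespace FinMultigraph

variable {V E : Type} {G : FinMultigraph V E}
  {A B C D F S : Finset E} {u v w a b : V} {e f : E}

theorem Connects.refl (G : FinMultigraph V E) (A : Finset E) (u : V) : G.Connects A u u :=
  Relation.EqvGen.refl u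

theorem Connects.symm (h : G.Connects A u v) : G.Connects A v u := Relation.EqvGen.symm _ _ h

theorem Connects.trans (h : G.Connects A u v) (h' : G.Connects A v w) : G.Connects A u w :=
  Relation.EqvGen.trans _ _ _ h h'

theorem Connects.mono (hAB : A ⊆ B) (h : G.Connects A u v) : G.Connects B u v :=
  Relation.EqvGen.mono (fun _ _ ⟨e, he, hends⟩ => ⟨e, hAB he, hends⟩) _ _ h

theorem connects_of_mem (he : e ∈ A) (h : G.ends e = s(u, v)) : G.Connects A u v :=
  Relation.EqvGen.rel _ _ ⟨e, he, h⟩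

theorem Connects.connects_left_iff (h : G.Connects A v w) :
    G.Connects A u v ↔ G.Connects A u w :=
  ⟨fun h' => h'.trans h, fun h' => h'.trans h.symm⟩

theorem exists_ends (G : FinMultigraph V E) (e : E) : ∃ a b, G.ends e = s(a, b) :=
  Sym2.ind (fun a b => ⟨a, b, rfl⟩) (G.ends e)

theorem endsConnected_iff (h : G.ends e = s(a, b)) :
    G.EndsConnected A e ↔ G.Connects A a b := by
  refine ⟨fun ⟨u, v, huv, hc⟩ => ?_, fun hc => ⟨a, b, h, hc⟩⟩
  rw [h, Sym2.eq_iff] at huv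
  rcases huv with ⟨rfl, rfl⟩ | ⟨rfl, rfl⟩
  exacts [hc, hc.symm]

theorem EndsConnected.mono (hAB : A ⊆ B) (h : G.EndsConnected A e) : G.EndsConnected B e :=
  let ⟨u, v, huv, hc⟩ := h; ⟨u, v, huv, hc.mono hAB⟩

theorem endsConnected_of_mem (he : e ∈ A) : G.EndsConnected A e :=
  let ⟨a, b, hab⟩ := G.exists_ends e; ⟨a, b, hab, connects_of_mem he hab⟩

theorem Connects.iff_of_forall_edge {P : V → Prop}
    (hP : ∀ f ∈ A, ∀ x y, G.ends f = s(x, y) → (P x ↔ P y)) (h : G.Connects A u v) :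
    P u ↔ P v := by
  induction h with
  | rel x y hxy => obtain ⟨f, hf, hends⟩ := hxy; exact hP f hf x y hends
  | refl => rfl
  | symm _ _ _ ih => exact ih.symm
  | trans _ _ _ _ _ ih₁ ih₂ => exact ih₁.trans ih₂

theorem Connects.of_forall_endsConnected (hAB : ∀ f ∈ A, G.EndsConnected B f)
    (h : G.Connects A u v) : G.Connects B u v := by
  refine (h.iff_of_forall_edge (P := G.Connects B u) fun f hf x y hxy => ?_).1 (.refl G B u)
  exact ((endsConnected_iff hxy).1 (hAB f hf)).connects_left_iff

theorem EndsConnected.of_forall_endsConnected (hAB : ∀ f ∈ A, G.EndsConnected B f)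
    (h : G.EndsConnected A e) : G.EndsConnected B e :=
  let ⟨u, v, huv, hc⟩ := h; ⟨u, v, huv, hc.of_forall_endsConnected hAB⟩

theorem connects_insert_iff [DecidableEq E] (he : G.ends e = s(a, b)) :
    G.Connects (insert e B) u v ↔ G.Connects B u v ∨
      (G.Connects B u a ∧ G.Connects B b v) ∨ (G.Connects B u b ∧ G.Connects B a v) := by
  refine ⟨fun h => (h.iff_of_forall_edge (P := fun w => G.Connects B u w ∨
    (G.Connects B u a ∧ G.Connects B b w) ∨ (G.Connects B u b ∧ G.Connects B a w))
    fun f hf x y hxy => ?_).1 (Or.inl (.refl G B u)), ?_⟩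
  · rcases mem_insert.1 hf with rfl | hfB
    · rw [he, Sym2.eq_iff] at hxy
      have := Connects.refl G B a
      have := Connects.refl G B b
      rcases hxy with ⟨rfl, rfl⟩ | ⟨rfl, rfl⟩ <;> tauto
    · have hxy := connects_of_mem hfB hxy
      simp only [hxy.connects_left_iff]
  · have hB : B ⊆ insert e B := subset_insert e B
    have hab : G.Connects (insert e B) a b := connects_of_mem (mem_insert_self e B) he
    rintro (h | ⟨h₁, h₂⟩ | ⟨h₁, h₂⟩)
    · exact h.mono hB
    · exact (h₁.mono hB).trans (hab.trans (h₂.mono hB))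
    · exact (h₁.mono hB).trans (hab.symm.trans (h₂.mono hB))

theorem Connects.exists_crossing (hC : G.Connects C a b) (hD : ¬ G.Connects D a b)
    (hDC : D ⊆ C) : ∃ f ∈ C, f ∉ D ∧ ∃ C' ⊆ C, f ∉ C' ∧
      ∃ x y, G.ends f = s(x, y) ∧ G.Connects C' a x ∧ G.Connects C' y b := by
  classical
  -- Add the edges of `C \ D` to `D` one at a time: `f` is the one that first joins `a` to `b`.
  suffices ∀ S : Finset E, G.Connects (D ∪ S) a b → ∃ f ∈ D ∪ S, f ∉ D ∧ ∃ C' ⊆ D ∪ S,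
      f ∉ C' ∧ ∃ x y, G.ends f = s(x, y) ∧ G.Connects C' a x ∧ G.Connects C' y b by
    rw [← union_sdiff_of_subset hDC] at hC ⊢
    exact this _ hC
  intro S
  induction S using Finset.induction_on with
  | empty => simpa using fun h => absurd h hD
  | insert f S _ ih =>
    intro h
    have hsub : D ∪ S ⊆ D ∪ insert f S := union_subset_union_right (subset_insert f S)
    by_cases hS : G.Connects (D ∪ S) a b
    · obtain ⟨g, hg, hgD, C', hC', hgC', rest⟩ := ih hS
      exact ⟨g, hsub hg, hgD, C', hC'.trans hsub, hgC', rest⟩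
    have hf : f ∉ D ∪ S := fun hf => hS (by rwa [union_insert, insert_eq_of_mem hf] at h)
    have hfD : f ∉ D := fun hfD => hf (mem_union_left S hfD)
    have hfmem : f ∈ D ∪ insert f S := mem_union_right D (mem_insert_self f S)
    obtain ⟨x, y, hxy⟩ := G.exists_ends f
    rw [union_insert, connects_insert_iff hxy] at h
    rcases h with h | ⟨h₁, h₂⟩ | ⟨h₁, h₂⟩
    · exact absurd h hS
    · exact ⟨f, hfmem, hfD, D ∪ S, hsub, hf, x, y, hxy, h₁, h₂⟩
    · exact ⟨f, hfmem, hfD, D ∪ S, hsub, hf, y, x, hxy.trans Sym2.eq_swap, h₁, h₂⟩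

theorem isForest_iff :
    G.IsForest F ↔ ∀ e ∈ F, ∀ C ⊆ F, e ∉ C → ¬ G.EndsConnected C e := by
  refine ⟨fun hF e he C hCF heC hc => hF e he (hc.mono (subset_erase.2 ⟨hCF, heC⟩)),
    fun hF e he => hF e he _ (erase_subset e F) (notMem_erase e F)⟩

theorem mem_cycleEdges : f ∈ G.cycleEdges F e ↔
    f = e ∨ f ∈ F ∧ ∀ C ⊆ F, f ∉ C → ¬ G.EndsConnected C e := by
  rw [cycleEdges, mem_insert, mem_filter]
  refine or_congr_right (and_congr_right fun _ => ⟨fun h C hCF hfC hc => ?_, fun h => ?_⟩)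
  · exact h (hc.mono (subset_erase.2 ⟨hCF, hfC⟩))
  · exact h _ (erase_subset f F) (notMem_erase f F)

section LinearOrder

variable [LinearOrder E]

theorem filter_gt_subset_filter_gt (A : Finset E) (h : e ≤ f) :
    A.filter (f < ·) ⊆ A.filter (e < ·) := fun _ hg =>
  mem_filter.2 ⟨(mem_filter.1 hg).1, h.trans_lt (mem_filter.1 hg).2⟩

theorem ExtActive.endsConnected_filter_gt (hF : G.IsForest F) (he : G.ExtActive F e) :
    G.EndsConnected (F.filter (e < ·)) e := by
  obtain ⟨heF, hc, hmin⟩ := he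
  obtain ⟨a, b, hab⟩ := G.exists_ends e
  rw [endsConnected_iff hab] at hc ⊢
  by_contra hD
  obtain ⟨f, hfF, hfD, C', hC'F, hfC', x, y, hxy, hax, hyb⟩ :=
    hc.exists_crossing hD (filter_subset _ F)
  -- `f` separates the ends of `e` in the forest, so it lies on the cycle of `e`.
  have hfcyc : f ∈ G.cycleEdges F e := by
    refine mem_cycleEdges.2 (Or.inr ⟨hfF, fun C hCF hfC hC => ?_⟩)
    refine isForest_iff.1 hF f hfF (C ∪ C') (union_subset hCF hC'F) (by simp [hfC, hfC'])
      ((endsConnected_iff hxy).2 ?_)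
    have hC : G.Connects (C ∪ C') a b := ((endsConnected_iff hab).1 hC).mono subset_union_left
    exact ((hax.mono subset_union_right).symm.trans hC).trans (hyb.mono subset_union_right).symm
  have hef : e < f := lt_of_le_of_ne (hmin f hfcyc) (ne_of_mem_of_not_mem hfF heF).symm
  exact hfD (mem_filter.2 ⟨hfF, hef⟩)

/-- Kruskal's algorithm run on `A` in decreasing edge order. -/
noncomputable def greedyForest (G : FinMultigraph V E) (A : Finset E) : Finset E :=
  A.filter fun e => ¬ G.EndsConnected (A.filter (e < ·)) e

theorem greedyForest_subset : G.greedyForest A ⊆ A := filter_subset _ A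

theorem endsConnected_filter_gt_of_notMem_greedyForest (he : e ∈ A)
    (he' : e ∉ G.greedyForest A) : G.EndsConnected (A.filter (e < ·)) e := by
  simpa [greedyForest, he] using he'

variable [Fintype E]

theorem mem_extActives : e ∈ G.extActives F ↔ G.ExtActive F e := by
  rw [extActives, mem_filter, and_iff_right (mem_univ e)]

theorem isForest_of_forall_not_endsConnected_filter_gt
    (h : ∀ e ∈ B, ¬ G.EndsConnected (B.filter (e < ·)) e) : G.IsForest B := by
  rw [isForest_iff]
  intro e
  induction e using WellFoundedLT.induction with
  | _ e ih =>
  intro he C hCB heC hc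
  obtain ⟨a, b, hab⟩ := G.exists_ends e
  rw [endsConnected_iff hab] at hc
  have hD : ¬ G.Connects (C.filter (e < ·)) a b := fun hD =>
    h e he ((endsConnected_iff hab).2 (hD.mono (filter_subset_filter _ hCB)))
  obtain ⟨f, hfC, hfD, C', hC'C, hfC', x, y, hxy, hax, hyb⟩ :=
    hc.exists_crossing hD (filter_subset _ C)
  have hlt : f < e := lt_of_le_of_ne (not_lt.1 fun h' => hfD (mem_filter.2 ⟨hfC, h'⟩))
    (ne_of_mem_of_not_mem hfC heC)
  have hsub : C' ⊆ insert e C' := subset_insert e C'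
  refine ih f hlt (hCB hfC) (insert e C') (insert_subset he (hC'C.trans hCB))
    (by simp [hlt.ne, hfC']) ((endsConnected_iff hxy).2 ?_)
  exact ((hax.mono hsub).symm.trans (connects_of_mem (mem_insert_self e C') hab)).trans
    (hyb.mono hsub).symm

theorem Connects.greedyForest_filter_gt (e : E) (h : G.Connects (A.filter (e < ·)) u v) :
    G.Connects ((G.greedyForest A).filter (e < ·)) u v := by
  induction e using WellFoundedGT.induction generalizing u v with
  | _ e ih =>
  refine h.of_forall_endsConnected fun f hf => ?_
  obtain ⟨hfA, hef⟩ := mem_filter.1 hf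
  by_cases hf' : f ∈ G.greedyForest A
  · exact endsConnected_of_mem (mem_filter.2 ⟨hf', hef⟩)
  obtain ⟨x, y, hxy, hc⟩ := endsConnected_filter_gt_of_notMem_greedyForest hfA hf'
  exact ⟨x, y, hxy, (ih f hef hc).mono (filter_gt_subset_filter_gt _ hef.le)⟩

theorem endsConnected_greedyForest_filter_gt (he : e ∈ A) (he' : e ∉ G.greedyForest A) :
    G.EndsConnected ((G.greedyForest A).filter (e < ·)) e :=
  let ⟨x, y, hxy, hc⟩ := endsConnected_filter_gt_of_notMem_greedyForest he he'
  ⟨x, y, hxy, hc.greedyForest_filter_gt e⟩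

theorem connects_greedyForest_iff :
    G.Connects (G.greedyForest A) u v ↔ G.Connects A u v := by
  refine ⟨(·.mono greedyForest_subset), (·.of_forall_endsConnected fun f hf => ?_)⟩
  by_cases hf' : f ∈ G.greedyForest A
  · exact endsConnected_of_mem hf'
  · exact (endsConnected_greedyForest_filter_gt hf hf').mono (filter_subset _ _)

theorem isForest_greedyForest : G.IsForest (G.greedyForest A) :=
  isForest_of_forall_not_endsConnected_filter_gt fun _ he hc =>
    (mem_filter.1 he).2 (hc.mono (filter_subset_filter _ greedyForest_subset))

theorem extActive_greedyForest (he : e ∈ A) (he' : e ∉ G.greedyForest A) :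
    G.ExtActive (G.greedyForest A) e := by
  have hc := endsConnected_greedyForest_filter_gt he he'
  refine ⟨he', hc.mono (filter_subset _ _), fun f hf => ?_⟩
  rcases mem_cycleEdges.1 hf with rfl | ⟨-, hf⟩
  · exact le_rfl
  refine not_lt.1 fun hfe => hf _ (filter_subset _ _) (fun hf' => ?_) hc
  exact (mem_filter.1 hf').2.not_gt hfe

theorem greedyForest_union (hF : G.IsForest F) (hS : S ⊆ G.extActives F) :
    G.greedyForest (F ∪ S) = F := by
  have hact : ∀ s ∈ S, G.ExtActive F s := fun s hs => mem_extActives.1 (hS hs)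
  ext e
  simp only [greedyForest, mem_filter, mem_union]
  refine ⟨fun ⟨he, hn⟩ => he.resolve_right fun heS => hn ?_, fun heF => ⟨Or.inl heF, fun hc => ?_⟩⟩
  · exact ((hact e heS).endsConnected_filter_gt hF).mono (filter_subset_filter _ subset_union_left)
  refine isForest_iff.1 hF e heF (F.filter (e < ·)) (filter_subset _ F) (by simp)
    (hc.of_forall_endsConnected fun g hg => ?_)
  rw [mem_filter, mem_union] at hg
  obtain ⟨hg | hg, heg⟩ := hg
  · exact endsConnected_of_mem (mem_filter.2 ⟨hg, heg⟩)
  · exact ((hact g hg).endsConnected_filter_gt hF).mono (filter_gt_subset_filter_gt F heg.le)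

theorem greedyForest_eq_iff (hF : G.IsForest F) :
    G.greedyForest A = F ↔ F ⊆ A ∧ A \ F ⊆ G.extActives F := by
  refine ⟨?_, fun ⟨hFA, hA⟩ => ?_⟩
  · rintro rfl
    exact ⟨greedyForest_subset, fun e he =>
      mem_extActives.2 (extActive_greedyForest (mem_sdiff.1 he).1 (mem_sdiff.1 he).2)⟩
  · rw [← union_sdiff_of_subset hFA]
    exact greedyForest_union hF hA

theorem disjoint_extActives : Disjoint F (G.extActives F) :=
  disjoint_right.2 fun _ he => (mem_extActives.1 he).1

theorem sum_filter_greedyForest_eq {M : Type*} [AddCommMonoid M] (hF : G.IsForest F)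
    (g : Finset E → M) :
    ∑ A with G.greedyForest A = F, g A = ∑ S ∈ (G.extActives F).powerset, g (F ∪ S) := by
  refine (sum_nbij' (F ∪ ·) (· \ F) (fun S hS => ?_) (fun A hA => ?_)
    (fun S hS => union_sdiff_cancel_left (disjoint_extActives.mono_right (mem_powerset.1 hS)))
    (fun A hA => ?_) fun _ _ => rfl).symm
  · exact mem_filter.2 ⟨mem_univ _, greedyForest_union hF (mem_powerset.1 hS)⟩
  · exact mem_powerset.2 ((greedyForest_eq_iff hF).1 (mem_filter.1 hA).2).2
  · exact union_sdiff_of_subset ((greedyForest_eq_iff hF).1 (mem_filter.1 hA).2).1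

end LinearOrder

section Components

variable [Fintype V]

theorem prod_comp_congr {M : Type*} [CommMonoid M] (h : ∀ u v, G.Connects A u v ↔ G.Connects B u v)
    (w : ℕ → M) :
    ∏ c : G.Comp A, w (G.compVerts A c).card = ∏ c : G.Comp B, w (G.compVerts B c).card := by
  refine Fintype.prod_equiv (Quotient.congr (Equiv.refl V) h) _ _ fun c => ?_
  obtain ⟨v, rfl⟩ := Quotient.exists_rep c
  congr 2
  ext x
  simp only [compVerts, mem_filter, mem_univ, true_and, Quotient.eq]
  exact (h x v).trans (Quotient.eq (r := G.compSetoid B)).symm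

variable [Fintype E] [LinearOrder E]

theorem sum_filter_greedyForest_eq_mul {R : Type*} [CommSemiring R] (hF : G.IsForest F)
    (w : ℕ → R) (x : R) :
    ∑ A with G.greedyForest A = F, (∏ c : G.Comp A, w (G.compVerts A c).card) * x ^ A.card =
      (∏ c : G.Comp F, w (G.compVerts F c).card) * x ^ F.card *
        (x + 1) ^ (G.extActives F).card := by
  have hpow : ∑ S ∈ (G.extActives F).powerset, x ^ S.card = (x + 1) ^ (G.extActives F).card := by
    simpa using sum_pow_mul_eq_add_pow x 1 (G.extActives F)
  rw [sum_filter_greedyForest_eq hF, ← hpow, mul_sum]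
  refine sum_congr rfl fun S hS => ?_
  have hS := mem_powerset.1 hS
  rw [prod_comp_congr (A := F ∪ S) (B := F) (fun u v => by
    rw [← connects_greedyForest_iff, greedyForest_union hF hS]),
    card_union_of_disjoint (disjoint_extActives.mono_right hS), pow_add, mul_assoc]

end Components

section Potts

variable {q : ℕ}

theorem sum_ite_val_eq_zero_pow {R : Type*} [CommRing R] (hq : 1 ≤ q) (x : R) (n : ℕ) :
    ∑ α : Fin q, (if (α : ℕ) = 0 then x else 1) ^ n = x ^ n + q - 1 := by
  obtain ⟨q, rfl⟩ := Nat.exists_eq_add_of_le' hq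
  rw [Fin.sum_univ_succ]
  simp [Fin.val_succ]
  ring

theorem edgeDelta_of_ends (σ : V → Fin q) (h : G.ends e = s(a, b)) :
    G.edgeDelta σ e = if σ a = σ b then 1 else 0 := by
  rw [edgeDelta, h, Sym2.lift_mk]

theorem edgeDelta_eq_zero_or_one (σ : V → Fin q) (e : E) :
    G.edgeDelta σ e = 0 ∨ G.edgeDelta σ e = 1 := by
  obtain ⟨a, b, hab⟩ := G.exists_ends e
  rw [edgeDelta_of_ends σ hab]
  split_ifs <;> simp

theorem prod_edgeDelta (σ : V → Fin q) :
    ∏ e ∈ A, G.edgeDelta σ e = if G.compSetoid A ≤ Setoid.ker σ then 1 else 0 := by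
  split_ifs with h
  · refine prod_eq_one fun e he => ?_
    obtain ⟨a, b, hab⟩ := G.exists_ends e
    rw [edgeDelta_of_ends σ hab, if_pos (show σ a = σ b from h (connects_of_mem he hab))]
  · rw [prod_eq_zero_iff]
    by_contra h'
    push Not at h'
    refine h fun u v huv => (Connects.iff_of_forall_edge (P := (σ · = σ u)) ?_ huv).1 rfl |>.symm
    intro f hf x y hxy
    have h1 := (edgeDelta_eq_zero_or_one σ f).resolve_left (h' f hf)
    have hxy : σ x = σ y := by
      by_contra hne
      simp [edgeDelta_of_ends σ hxy, hne] at h1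
    rw [hxy]

theorem exp_mul_sum_edgeDelta [Fintype E] (z : ℂ) (σ : V → Fin q) :
    Complex.exp (z * ∑ e, G.edgeDelta σ e) =
      ∑ A : Finset E, (Complex.exp z - 1) ^ A.card * ∏ e ∈ A, G.edgeDelta σ e := by
  have h : ∀ e, Complex.exp (z * G.edgeDelta σ e) = 1 + (Complex.exp z - 1) * G.edgeDelta σ e :=
    fun e => by rcases edgeDelta_eq_zero_or_one σ e with h | h <;> rw [h] <;> simp
  simp_rw [mul_sum, Complex.exp_sum, h, prod_one_add, powerset_univ, prod_mul_distrib, prod_const]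

variable [Fintype V]

/-- Only spin states constant on the clusters of `A` contribute, and these are the spin
states of the clusters. -/
theorem sum_prod_edgeDelta_mul_prod (w : Fin q → ℂ) :
    ∑ σ : V → Fin q, (∏ e ∈ A, G.edgeDelta σ e) * ∏ v, w (σ v) =
      ∏ c : G.Comp A, ∑ α, w α ^ (G.compVerts A c).card := by
  calc ∑ σ : V → Fin q, (∏ e ∈ A, G.edgeDelta σ e) * ∏ v, w (σ v)
      = ∑ σ : {σ : V → Fin q // G.compSetoid A ≤ Setoid.ker σ}, ∏ v, w (σ.1 v) := by
        simp_rw [prod_edgeDelta, ite_mul, one_mul, zero_mul, ← sum_filter]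
        exact sum_subtype _ (fun σ => by simp) _
    _ = ∑ τ : G.Comp A → Fin q, ∏ v, w (τ (Quotient.mk _ v)) :=
        Fintype.sum_equiv (κ := G.Comp A → Fin q) (Setoid.liftEquiv _) _ _ fun σ => rfl
    _ = ∑ τ : G.Comp A → Fin q, ∏ c, w (τ c) ^ (G.compVerts A c).card := by
        refine sum_congr rfl fun τ _ => ?_
        rw [← prod_fiberwise' (κ := G.Comp A) univ (Quotient.mk _) (fun c => w (τ c))]
        refine prod_congr rfl fun c _ => ?_
        rw [prod_const]
        rfl
    _ = _ := (Fintype.prod_sum fun c α => w α ^ (G.compVerts A c).card).symm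

theorem ZconstField_eq_sum_finset [Fintype E] (hq : 1 ≤ q) (β J H : ℂ) :
    G.ZconstField q β J H = ∑ A : Finset E,
      (∏ c : G.Comp A, (Complex.exp (β * H * ((G.compVerts A c).card : ℂ)) + (q : ℂ) - 1)) *
        (Complex.exp (β * J) - 1) ^ A.card := by
  have hfield : ∀ σ : V → Fin q, Complex.exp (β * H * ∑ v, if (σ v : ℕ) = 0 then (1 : ℂ) else 0) =
      ∏ v, if (σ v : ℕ) = 0 then Complex.exp (β * H) else 1 := fun σ => by
    rw [mul_sum, Complex.exp_sum]
    refine prod_congr rfl fun v _ => ?_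
    split_ifs <;> simp
  calc G.ZconstField q β J H
      = ∑ σ : V → Fin q, ∑ A : Finset E, (Complex.exp (β * J) - 1) ^ A.card *
          ((∏ e ∈ A, G.edgeDelta σ e) * ∏ v, if (σ v : ℕ) = 0 then Complex.exp (β * H) else 1) := by
        refine sum_congr rfl fun σ _ => ?_
        rw [mul_add, Complex.exp_add, ← mul_assoc, ← mul_assoc, exp_mul_sum_edgeDelta, hfield,
          sum_mul]
        simp_rw [mul_assoc]
    _ = ∑ A : Finset E, (Complex.exp (β * J) - 1) ^ A.card *
          ∏ c : G.Comp A, (Complex.exp (β * H) ^ (G.compVerts A c).card + q - 1) := by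
        rw [sum_comm]
        simp_rw [← mul_sum, sum_prod_edgeDelta_mul_prod (fun α : Fin q =>
          if (α : ℕ) = 0 then Complex.exp (β * H) else 1), sum_ite_val_eq_zero_pow hq]
    _ = _ := by
        simp_rw [mul_comm (β * H), Complex.exp_nat_mul, mul_comm ((Complex.exp (β * J) - 1) ^ _)]

end Potts

end FinMultigraph

open FinMultigraph in
/-- Spanning forest expansion of the Potts partition function with
constant coupling `J` and constant field `H` favouring the first spin:
`Z(G) = Σ_F (∏_i (e^{βH|V(F_i)|}+q−1)) (e^{βJ}−1)^{|E(F)|} ∏_{EA(F)} e^{βJ}`. -/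
theorem ZconstField_spanning_forest_expansion {V E : Type} [Fintype V] [Fintype E]
    [LinearOrder E] (G : FinMultigraph V E) (q : ℕ) (hq : 1 ≤ q) (β J H : ℂ) :
    G.ZconstField q β J H =
      ∑ F ∈ Finset.univ.filter (fun F => G.IsForest F),
        (∏ c : G.Comp F,
          (Complex.exp (β * H * ((G.compVerts F c).card : ℂ)) + (q : ℂ) - 1)) *
        (Complex.exp (β * J) - 1) ^ F.card *
        ∏ e ∈ G.extActives F, Complex.exp (β * J) := by
  rw [ZconstField_eq_sum_finset hq, ← sum_fiberwise_of_maps_to (g := G.greedyForest)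
    fun A _ => mem_filter.2 ⟨mem_univ _, isForest_greedyForest⟩]
  refine sum_congr rfl fun F hF => ?_
  rw [sum_filter_greedyForest_eq_mul (mem_filter.1 hF).2
    (fun n => Complex.exp (β * H * (n : ℂ)) + (q : ℂ) - 1), sub_add_cancel, prod_const]
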